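/- Let S be a free numerical semigroup generated by a telescopic sequence T = (t_0, …, t_k) with gcd(T) = 1 that is a minimal generating sequence for S (no proper subsequence of T generates S). Then S has at least as many odd gaps as even gaps, i.e. O(G(S)) ≥ E(G(S)), and O(G(S)) = E(G(S)) if and only if every term of T is odd. -/
import Mathlib


/-- The monoid `⟨t_0, …, t_{n-1}⟩` of all nonnegative integer linear combinations of
the first `n` terms of the sequence `t`. -/
def genBy (t : ℕ → ℕ) (n : ℕ) : Set ℕ :=
  {s | ∃ x : ℕ → ℕ, s = ∑ i ∈ Finset.range n, x i * t i}

/-- `d_i = gcd(t_0, …, t_i)`. -/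
def seqD (t : ℕ → ℕ) (i : ℕ) : ℕ := Finset.gcd (Finset.range (i + 1)) t

/-- `c_j = d_{j-1} / d_j` (for `j ≥ 1`). -/
def seqC (t : ℕ → ℕ) (j : ℕ) : ℕ := seqD t (j - 1) / seqD t j

/-- The sequence `(t_0, …, t_k)` of positive integers is telescopic if
`c_j · t_j ∈ ⟨t_0, …, t_{j-1}⟩` for every `j = 1, …, k`. -/
def IsTelescopic (t : ℕ → ℕ) (k : ℕ) : Prop :=
  (∀ i ≤ k, 0 < t i) ∧ ∀ j, 1 ≤ j → j ≤ k → seqC t j * t j ∈ genBy t j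

/-- The monoid of all nonnegative integer linear combinations of the terms `t i`
for `i` ranging over the finite index set `J` (a "subsequence"). -/
def genByIdx (t : ℕ → ℕ) (J : Finset ℕ) : Set ℕ :=
  {s | ∃ x : ℕ → ℕ, s = ∑ i ∈ J, x i * t i}

/-- `O(T)`: the number of odd elements of `T`. -/
noncomputable def countOdd (T : Set ℕ) : ℕ := {x ∈ T | Odd x}.ncard

/-- `E(T)`: the number of even elements of `T`. -/
noncomputable def countEven (T : Set ℕ) : ℕ := {x ∈ T | Even x}.ncard



section basics
variable {t : ℕ → ℕ} {n m : ℕ}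

lemma genBy_add {a b : ℕ} (ha : a ∈ genBy t n) (hb : b ∈ genBy t n) :
    a + b ∈ genBy t n := by
  obtain ⟨x, hx⟩ := ha; obtain ⟨y, hy⟩ := hb
  exact ⟨fun i => x i + y i, by simp [hx, hy, add_mul, Finset.sum_add_distrib]⟩

lemma genBy_nsmul {a : ℕ} (m : ℕ) (ha : a ∈ genBy t n) : m * a ∈ genBy t n := by
  obtain ⟨x, hx⟩ := ha
  exact ⟨fun i => m * x i, by simp [hx, Finset.mul_sum, mul_assoc]⟩

lemma t_mem_genBy (h : m < n) : t m ∈ genBy t n := by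
  refine ⟨fun i => if i = m then 1 else 0, ?_⟩
  rw [Finset.sum_congr rfl (fun i _ => by
    rcases eq_or_ne i m with rfl | hi
    · simp
    · simp [hi] : ∀ i ∈ Finset.range n,
      (if i = m then 1 else 0) * t i = if i = m then t m else 0)]
  simp [Finset.sum_ite_eq', h]

lemma zero_mem_genBy : 0 ∈ genBy t n := ⟨fun _ => 0, by simp⟩

lemma genBy_mono (h : n ≤ m) : genBy t n ⊆ genBy t m := by
  rintro s ⟨x, hx⟩
  refine ⟨fun i => if i < n then x i else 0, ?_⟩
  rw [hx, ← Finset.sum_subset (Finset.range_subset_range.2 h)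
    (fun i _ hi => by simp only [Finset.mem_range] at hi; simp [hi])]
  exact Finset.sum_congr rfl fun i hi => by simp [Finset.mem_range.1 hi]

lemma seqD_zero : seqD t 0 = t 0 := by
  simp [seqD, Finset.range_one]

lemma seqD_succ : seqD t (n + 1) = Nat.gcd (t (n + 1)) (seqD t n) := by
  rw [seqD, Finset.range_add_one, Finset.gcd_insert]; rfl

lemma seqD_dvd_t (h : m ≤ n) : seqD t n ∣ t m :=
  Finset.gcd_dvd (Finset.mem_range.2 (Nat.lt_succ_of_le h))

lemma seqD_succ_dvd : seqD t (n + 1) ∣ seqD t n := by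
  rw [seqD_succ]; exact Nat.gcd_dvd_right _ _

lemma seqD_pos (ht : 0 < t 0) : 0 < seqD t n :=
  Nat.pos_of_ne_zero fun h => by
    have := (Finset.gcd_eq_zero_iff.1 h) 0 (Finset.mem_range.2 (Nat.succ_pos n))
    omega

lemma seqC_succ_mul (ht : 0 < t 0) : seqC t (n + 1) * seqD t (n + 1) = seqD t n := by
  have : seqC t (n + 1) = seqD t n / seqD t (n + 1) := by simp [seqC]
  rw [this, Nat.div_mul_cancel seqD_succ_dvd]

lemma seqC_pos (ht : 0 < t 0) : 0 < seqC t (n + 1) := by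
  have h := seqC_succ_mul (t := t) (n := n) ht
  have := seqD_pos (t := t) (n := n) ht
  rcases Nat.eq_zero_or_pos (seqC t (n + 1)) with h0 | h0
  · rw [h0, zero_mul] at h; omega
  · exact h0

lemma seqB_mul (ht : 0 < t 0) : t (n + 1) / seqD t (n + 1) * seqD t (n + 1) = t (n + 1) :=
  Nat.div_mul_cancel (seqD_dvd_t le_rfl)

lemma seqCB_coprime (ht : 0 < t 0) :
    Nat.Coprime (seqC t (n + 1)) (t (n + 1) / seqD t (n + 1)) := by
  have hg : Nat.gcd (seqD t n) (t (n + 1)) = seqD t (n + 1) := by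
    rw [seqD_succ, Nat.gcd_comm]
  have hpos : 0 < Nat.gcd (seqD t n) (t (n + 1)) := by rw [hg]; exact seqD_pos ht
  have := Nat.coprime_div_gcd_div_gcd hpos
  rw [hg] at this
  have hc : seqC t (n + 1) = seqD t n / seqD t (n + 1) := by simp [seqC]
  rw [hc]
  exact this

lemma dvd_of_mem_genBy {s : ℕ} (h : s ∈ genBy t (n + 1)) : seqD t n ∣ s := by
  obtain ⟨x, rfl⟩ := h
  exact Finset.dvd_sum fun i hi =>
    Dvd.dvd.mul_left (seqD_dvd_t (Nat.lt_succ_iff.1 (Finset.mem_range.1 hi))) _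

end basics

section decomp
variable {t : ℕ → ℕ} {k n : ℕ}

/-- Decomposition: membership in `genBy t (n+2)` via a bounded coefficient of `t (n+1)`. -/
lemma mem_succ_iff (htel : IsTelescopic t k) (hk : n + 1 ≤ k) {s : ℕ} :
    s ∈ genBy t (n + 2) ↔
      ∃ x < seqC t (n + 1), ∃ s' ∈ genBy t (n + 1), s = x * t (n + 1) + s' := by
  have ht0 : 0 < t 0 := htel.1 0 (Nat.zero_le k)
  have hcpos : 0 < seqC t (n + 1) := seqC_pos ht0
  constructor
  · rintro ⟨x, rfl⟩
    set c := seqC t (n + 1) with hc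
    have hct : c * t (n + 1) ∈ genBy t (n + 1) := htel.2 (n + 1) (Nat.le_add_left 1 n) hk
    have hrest : ∑ i ∈ Finset.range (n + 1), x i * t i ∈ genBy t (n + 1) := ⟨x, rfl⟩
    refine ⟨x (n + 1) % c, Nat.mod_lt _ hcpos,
      x (n + 1) / c * (c * t (n + 1)) + ∑ i ∈ Finset.range (n + 1), x i * t i,
      genBy_add (genBy_nsmul _ hct) hrest, ?_⟩
    rw [Finset.sum_range_succ]
    conv_lhs => rw [← Nat.mod_add_div (x (n + 1)) c]
    ring
  · rintro ⟨x, _, s', hs', rfl⟩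
    exact genBy_add (genBy_nsmul x (t_mem_genBy (Nat.lt_succ_self _)))
      (genBy_mono (Nat.le_succ _) hs')

/-- Scaled membership characterization. -/
lemma scaled_mem_iff (htel : IsTelescopic t k) (hk : n + 1 ≤ k) {j : ℕ} :
    j * seqD t (n + 1) ∈ genBy t (n + 2) ↔
      ∃ x < seqC t (n + 1), ∃ i, i * seqD t n ∈ genBy t (n + 1) ∧
        j = x * (t (n + 1) / seqD t (n + 1)) + i * seqC t (n + 1) := by
  have ht0 : 0 < t 0 := htel.1 0 (Nat.zero_le k)
  have hdpos : 0 < seqD t (n + 1) := seqD_pos ht0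
  rw [mem_succ_iff htel hk]
  constructor
  · rintro ⟨x, hx, s', hs', hEq⟩
    obtain ⟨i, hi0⟩ := dvd_of_mem_genBy hs'
    have hi : s' = i * seqD t n := by rw [hi0, mul_comm]
    refine ⟨x, hx, i, by rw [← hi]; exact hs', ?_⟩
    have h1 : j * seqD t (n + 1) =
        (x * (t (n + 1) / seqD t (n + 1)) + i * seqC t (n + 1)) * seqD t (n + 1) := by
      rw [hEq, hi, add_mul, mul_assoc, seqB_mul ht0, mul_assoc, seqC_succ_mul ht0]
    exact Nat.eq_of_mul_eq_mul_right hdpos h1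
  · rintro ⟨x, hx, i, hmem, rfl⟩
    refine ⟨x, hx, i * seqD t n, hmem, ?_⟩
    rw [add_mul, mul_assoc, seqB_mul ht0, mul_assoc, seqC_succ_mul ht0]

/-- Uniqueness of the scaled decomposition. -/
lemma scaled_uniq (htel : IsTelescopic t k) (hk : n + 1 ≤ k) {x y i j : ℕ}
    (hx : x < seqC t (n + 1)) (hy : y < seqC t (n + 1))
    (h : x * (t (n + 1) / seqD t (n + 1)) + i * seqC t (n + 1)
       = y * (t (n + 1) / seqD t (n + 1)) + j * seqC t (n + 1)) : x = y ∧ i = j := by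
  have ht0 : 0 < t 0 := htel.1 0 (Nat.zero_le k)
  set c := seqC t (n + 1) with hc
  set b := t (n + 1) / seqD t (n + 1) with hb
  have hco : Nat.Coprime c b := seqCB_coprime ht0
  have hcpos : 0 < c := seqC_pos ht0
  -- wlog x ≤ y
  have key : ∀ x' y' i' j', x' < c → y' < c →
      x' * b + i' * c = y' * b + j' * c → x' ≤ y' → x' = y' ∧ i' = j' := by
    intro x' y' i' j' hx' hy' h' hxy
    obtain ⟨e, rfl⟩ := Nat.exists_eq_add_of_le hxy
    have h2 : i' * c = e * b + j' * c := by
      have : x' * b + i' * c = x' * b + (e * b + j' * c) := by rw [h']; ring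
      omega
    have hcd : c ∣ e * b := ⟨i' - j', by
      have : e * b = i' * c - j' * c := by omega
      rw [this, ← Nat.sub_mul, mul_comm]⟩
    have hce : c ∣ e := (Nat.Coprime.dvd_of_dvd_mul_right hco) hcd
    have he : e = 0 := by
      rcases Nat.eq_zero_or_pos e with h0 | h0
      · exact h0
      · exact absurd (Nat.le_of_dvd h0 hce) (by omega)
    subst he
    constructor
    · omega
    · have : i' * c = j' * c := by omega
      exact Nat.eq_of_mul_eq_mul_right hcpos this
  rcases Nat.le_total x y with hxy | hxy
  · exact key x y i j hx hy h hxy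
  · obtain ⟨h1, h2⟩ := key y x j i hy hx h.symm hxy
    exact ⟨h1.symm, h2.symm⟩

/-- Surjectivity of multiplication by a coprime element mod c. -/
lemma exists_mul_mod {b c : ℕ} (hco : Nat.Coprime c b) (hc : 0 < c) (r : ℕ) :
    ∃ x < c, x * b % c = r % c := by
  have hinj : Set.InjOn (fun x => x * b % c) ↑(Finset.range c) := by
    intro x hx y hy hxy
    simp only [Finset.coe_range, Set.mem_Iio] at hx hy
    simp only at hxy
    rcases Nat.le_total x y with h | h
    · obtain ⟨e, rfl⟩ := Nat.exists_eq_add_of_le h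
      have : c ∣ e * b := by
        have h1 : (x + e) * b = x * b + e * b := by ring
        have h2 : (x * b + e * b) % c = x * b % c := by rw [← h1, hxy]
        have := (Nat.modEq_iff_dvd' (Nat.le_add_right _ _)).mp (Nat.ModEq.symm h2)
        simpa using this
      have := (Nat.Coprime.dvd_of_dvd_mul_right hco) this
      have : e = 0 := by
        rcases Nat.eq_zero_or_pos e with h0 | h0
        · exact h0
        · exact absurd (Nat.le_of_dvd h0 this) (by omega)
      omega
    · obtain ⟨e, rfl⟩ := Nat.exists_eq_add_of_le h
      have : c ∣ e * b := by
        have h1 : (y + e) * b = y * b + e * b := by ring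
        have h2 : (y * b + e * b) % c = y * b % c := by rw [← h1, ← hxy]
        have := (Nat.modEq_iff_dvd' (Nat.le_add_right _ _)).mp (Nat.ModEq.symm h2)
        simpa using this
      have := (Nat.Coprime.dvd_of_dvd_mul_right hco) this
      have : e = 0 := by
        rcases Nat.eq_zero_or_pos e with h0 | h0
        · exact h0
        · exact absurd (Nat.le_of_dvd h0 this) (by omega)
      omega
  have himg : Finset.image (fun x => x * b % c) (Finset.range c) = Finset.range c := by
    apply Finset.eq_of_subset_of_card_le
    · intro y hy
      obtain ⟨x, _, rfl⟩ := Finset.mem_image.1 hy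
      exact Finset.mem_range.2 (Nat.mod_lt _ hc)
    · rw [Finset.card_image_of_injOn hinj]
  have : r % c ∈ Finset.image (fun x => x * b % c) (Finset.range c) := by
    rw [himg]; exact Finset.mem_range.2 (Nat.mod_lt _ hc)
  obtain ⟨x, hx, hxe⟩ := Finset.mem_image.1 this
  exact ⟨x, Finset.mem_range.1 hx, hxe⟩

end decomp


section arith

lemma sum_neg_one_pow (n : ℕ) :
    ∑ i ∈ Finset.range n, (-1 : ℤ) ^ i = if Odd n then 1 else 0 := by
  induction n with
  | zero => simp
  | succ n ih =>
    rw [Finset.sum_range_succ, ih]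
    rcases Nat.even_or_odd n with h | h
    · simp [Nat.not_odd_iff_even.2 h, Even.add_one h, h.neg_one_pow]
    · simp [h, Nat.not_odd_iff_even.2 (Odd.add_one h), h.neg_one_pow]

lemma floor_reflect {b c x : ℕ} (hco : Nat.Coprime c b) (hx0 : 0 < x) (hxc : x < c) :
    x * b / c + (c - x) * b / c + 1 = b := by
  have hc2 : 2 ≤ c := by omega
  have hb1 : 1 ≤ b := by
    rcases Nat.eq_zero_or_pos b with h | h
    · subst h; simp [Nat.Coprime, Nat.coprime_zero_right] at hco; omega
    · exact h
  set q := x * b / c with hq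
  set r := x * b % c with hr
  have hqr : x * b = c * q + r := (Nat.div_add_mod _ _).symm
  have hrc : r < c := Nat.mod_lt _ (by omega)
  have hr0 : 0 < r := by
    rcases Nat.eq_zero_or_pos r with h | h
    · exfalso
      have hdvd : c ∣ x * b := Nat.dvd_of_mod_eq_zero h
      have := (Nat.Coprime.dvd_of_dvd_mul_right hco) hdvd
      have := Nat.le_of_dvd hx0 this
      omega
    · exact h
  have hxb : x * b < c * b := Nat.mul_lt_mul_of_lt_of_le hxc le_rfl (by omega)
  have hqb : q < b := by
    rw [hq]
    exact Nat.div_lt_of_lt_mul hxb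
  have hkey : (c - x) * b = c * (b - q - 1) + (c - r) := by
    have h1 : (c - x) * b + x * b = c * b := by
      rw [← add_mul]; congr 1; omega
    have h2 : c * (b - q - 1) + c * q + c = c * b := by
      rw [← Nat.mul_add, ← Nat.mul_succ]
      congr 1
      omega
    omega
  rw [hkey, Nat.mul_add_div (by omega), Nat.div_eq_of_lt (by omega)]
  omega

lemma lt_div_iff_scaled {c A y i : ℕ} (hc : 0 < c) (hA : c ∣ A) :
    i * c + y < A ↔ i < A / c - y / c := by
  obtain ⟨M, rfl⟩ := hA
  rw [Nat.mul_div_cancel_left _ hc]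
  set q := y / c with hqd
  set r := y % c with hrd
  have hy : y = c * q + r := (Nat.div_add_mod _ _).symm
  have hrc : r < c := Nat.mod_lt _ hc
  constructor
  · intro h
    have h2 : c * (i + q) < c * M := by
      calc c * (i + q) = i * c + c * q := by ring
        _ ≤ i * c + y := by omega
        _ < c * M := h
    have := Nat.lt_of_mul_lt_mul_left h2
    omega
  · intro h
    have h2 : i + q + 1 ≤ M := by omega
    have h3 : c * (i + q + 1) ≤ c * M := Nat.mul_le_mul_left c h2
    calc i * c + y = c * (i + q) + r := by rw [hy]; ring
      _ < c * (i + q + 1) := by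
          have h4 : c * (i + q + 1) = c * (i + q) + c := by ring
          omega
      _ ≤ c * M := h3

end arith


lemma negpow_congr {m n : ℕ} (h : (Even m ↔ Even n)) : (-1 : ℤ) ^ m = (-1 : ℤ) ^ n := by
  rcases Nat.even_or_odd m with hm | hm
  · rw [hm.neg_one_pow, (h.mp hm).neg_one_pow]
  · have hn : Odd n := Nat.not_even_iff_odd.1 fun he => (Nat.not_even_iff_odd.2 hm) (h.mpr he)
    rw [hm.neg_one_pow, hn.neg_one_pow]

lemma pair_sum {c : ℕ} (hc : 1 ≤ c) (F : ℕ → ℤ) :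
    2 * ∑ x ∈ Finset.range c, F x =
      2 * F 0 + ∑ x ∈ Finset.range (c - 1), (F (x + 1) + F (c - (x + 1))) := by
  obtain ⟨c', rfl⟩ : ∃ c', c = c' + 1 := ⟨c - 1, by omega⟩
  rw [Finset.sum_range_succ' F c']
  have h2 : ∑ x ∈ Finset.range c', F (x + 1)
      = ∑ x ∈ Finset.range c', F (c' + 1 - (x + 1)) := by
    rw [← Finset.sum_range_reflect]
    apply Finset.sum_congr rfl
    intro j hj
    have hj' := Finset.mem_range.1 hj
    congr 1
    omega
  simp only [Nat.add_sub_cancel]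
  rw [Finset.sum_add_distrib, ← h2]
  ring

section identities
variable {b c : ℕ} (hco : Nat.Coprime c b)

lemma identI1 (hco : Nat.Coprime c b) (hc : Even c) (hc2 : 2 ≤ c) :
    2 * ∑ x ∈ Finset.range c, (-1 : ℤ) ^ x * ((x * b / c : ℕ) : ℤ) = 1 - b := by
  have hb : Odd b := by
    rcases Nat.even_or_odd b with h | h
    · exfalso
      obtain ⟨c2, rfl⟩ := hc
      obtain ⟨b2, rfl⟩ := h
      have : 2 ∣ Nat.gcd (c2 + c2) (b2 + b2) := Nat.dvd_gcd ⟨c2, by ring⟩ ⟨b2, by ring⟩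
      rw [hco] at this
      omega
    · exact h
  rw [pair_sum (by omega)]
  have hpair : ∀ x ∈ Finset.range (c - 1),
      ((-1 : ℤ) ^ (x + 1) * ((x + 1) * b / c : ℕ) +
        (-1 : ℤ) ^ (c - (x + 1)) * ((c - (x + 1)) * b / c : ℕ))
      = (-1 : ℤ) ^ (x + 1) * (b - 1) := by
    intro x hx
    have hxr := Finset.mem_range.1 hx
    have hfl := floor_reflect hco (x := x + 1) (by omega) (by omega)
    have hsign : (-1 : ℤ) ^ (c - (x + 1)) = (-1 : ℤ) ^ (x + 1) := by
      apply negpow_congr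
      rw [Nat.even_sub (by omega)]
      simp [hc]
    rw [hsign, ← mul_add]
    congr 1
    have hgen : ∀ q1 q2 : ℕ, q1 + q2 + 1 = b → (q1 : ℤ) + (q2 : ℤ) = (b : ℤ) - 1 := by
      intros q1 q2 h; omega
    exact hgen _ _ hfl
  rw [Finset.sum_congr rfl hpair]
  have : ∑ x ∈ Finset.range (c - 1), (-1 : ℤ) ^ (x + 1) * (b - 1)
      = -(b - 1) * ∑ x ∈ Finset.range (c - 1), (-1 : ℤ) ^ x := by
    rw [Finset.mul_sum]
    apply Finset.sum_congr rfl
    intro x _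
    rw [pow_succ]
    ring
  rw [this, sum_neg_one_pow]
  have hodd : Odd (c - 1) := by
    rw [Nat.odd_iff]
    rw [Nat.even_iff] at hc
    omega
  simp [hodd]

lemma identI2 (hco : Nat.Coprime c b) (hc : Odd c) (hb : Odd b) :
    ∑ x ∈ Finset.range c, (-1 : ℤ) ^ x * (if Odd (x * b / c) then (1 : ℤ) else 0) = 0 := by
  have hc1 : 1 ≤ c := hc.pos
  have h2 : 2 * ∑ x ∈ Finset.range c, (-1 : ℤ) ^ x * (if Odd (x * b / c) then (1 : ℤ) else 0)
      = 0 := by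
    rw [pair_sum hc1]
    have hpair : ∀ x ∈ Finset.range (c - 1),
        ((-1 : ℤ) ^ (x + 1) * (if Odd ((x + 1) * b / c) then (1 : ℤ) else 0) +
          (-1 : ℤ) ^ (c - (x + 1)) * (if Odd ((c - (x + 1)) * b / c) then (1 : ℤ) else 0))
        = 0 := by
      intro x hx
      have hxr := Finset.mem_range.1 hx
      have hfl := floor_reflect hco (x := x + 1) (by omega) (by omega)
      have hsign : (-1 : ℤ) ^ (c - (x + 1)) = -(-1 : ℤ) ^ (x + 1) := by
        have : (-1 : ℤ) ^ (c - (x + 1)) = (-1 : ℤ) ^ (x + 1 + 1) := by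
          apply negpow_congr
          rw [Nat.even_sub (by omega)]
          simp only [Nat.even_iff]
          rw [Nat.odd_iff] at hc
          omega
        rw [this, pow_succ]
        ring
      have hiff : Odd ((x + 1) * b / c) ↔ Odd ((c - (x + 1)) * b / c) := by
        rw [Nat.odd_iff, Nat.odd_iff]
        rw [Nat.odd_iff] at hb
        have hgen : ∀ q1 q2 : ℕ, q1 + q2 + 1 = b → (q1 % 2 = 1 ↔ q2 % 2 = 1) := by
          intro q1 q2 hq; omega
        exact hgen _ _ hfl
      rw [hsign]
      by_cases h : Odd ((x + 1) * b / c)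
      · simp [h, hiff.mp h]
      · have h2 : ¬ Odd ((c - (x + 1)) * b / c) := fun hh => h (hiff.mpr hh)
        simp [h, h2]
    rw [Finset.sum_congr rfl hpair]
    simp
  omega

lemma identI3 (hco : Nat.Coprime c b) (hc : Odd c) (hb : Even b) :
    2 * ∑ x ∈ Finset.range c, (if Odd (x * b / c) then (1 : ℤ) else 0) = c - 1 := by
  have hc1 : 1 ≤ c := hc.pos
  rw [pair_sum hc1]
  have hpair : ∀ x ∈ Finset.range (c - 1),
      ((if Odd ((x + 1) * b / c) then (1 : ℤ) else 0) +
        (if Odd ((c - (x + 1)) * b / c) then (1 : ℤ) else 0)) = 1 := by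
    intro x hx
    have hxr := Finset.mem_range.1 hx
    have hfl := floor_reflect hco (x := x + 1) (by omega) (by omega)
    have hiff : Odd ((x + 1) * b / c) ↔ ¬ Odd ((c - (x + 1)) * b / c) := by
      rw [Nat.odd_iff, Nat.odd_iff]
      rw [Nat.even_iff] at hb
      have hgen : ∀ q1 q2 : ℕ, q1 + q2 + 1 = b → (q1 % 2 = 1 ↔ ¬ q2 % 2 = 1) := by
        intro q1 q2 hq; omega
      exact hgen _ _ hfl
    by_cases h : Odd ((x + 1) * b / c)
    · simp [h, hiff.mp h]
    · have h2 : Odd ((c - (x + 1)) * b / c) := by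
        by_contra hh
        exact h (hiff.mpr hh)
      simp [h, h2]
  rw [Finset.sum_congr rfl hpair]
  simp only [Finset.sum_const, Finset.card_range, nsmul_eq_mul, mul_one]
  simp only [Nat.zero_mul, Nat.zero_div]
  norm_num
  omega

/-- The recursive parity invariant. -/
def Vv (t : ℕ → ℕ) : ℕ → ℕ
  | 0 => 1
  | n + 1 =>
    if Even (seqC t (n + 1)) then t (n + 1) / seqD t (n + 1)
    else if Even (t (n + 1) / seqD t (n + 1)) then seqC t (n + 1) * Vv t n
    else Vv t n

lemma coprime_even_odd {c b : ℕ} (hco : Nat.Coprime c b) (hc : Even c) : Odd b := by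
  rcases Nat.even_or_odd b with h | h
  · exfalso
    obtain ⟨c2, rfl⟩ := hc
    obtain ⟨b2, rfl⟩ := h
    have : 2 ∣ Nat.gcd (c2 + c2) (b2 + b2) := Nat.dvd_gcd ⟨c2, by ring⟩ ⟨b2, by ring⟩
    rw [hco] at this
    omega
  · exact h

open Classical in
noncomputable def altG (t : ℕ → ℕ) (n Λ : ℕ) : ℤ :=
  ∑ i ∈ Finset.range Λ, if i * seqD t n ∈ genBy t (n + 1) then (-1 : ℤ) ^ i else 0

open Classical in
noncomputable def cntG (t : ℕ → ℕ) (n Λ : ℕ) : ℤ :=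
  ∑ i ∈ Finset.range Λ, if i * seqD t n ∈ genBy t (n + 1) then (1 : ℤ) else 0

open Classical in
theorem key_induction (t : ℕ → ℕ) (k : ℕ) (htel : IsTelescopic t k) :
    ∀ n, n ≤ k → ∃ Λ₀ : ℕ, Even Λ₀ ∧
      (∀ i, Λ₀ ≤ i → i * seqD t n ∈ genBy t (n + 1)) ∧
      (∀ Λ, Λ₀ ≤ Λ → 2 * altG t n Λ = (if Odd Λ then 2 else 0) + (Vv t n : ℤ) - 1) := by
  have ht0 : 0 < t 0 := htel.1 0 (Nat.zero_le k)
  intro n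
  induction n with
  | zero =>
    intro _
    refine ⟨0, Even.zero, fun i _ => ⟨fun _ => i, by simp [seqD_zero]⟩, fun Λ _ => ?_⟩
    have hall : ∀ i ∈ Finset.range Λ,
        (if i * seqD t 0 ∈ genBy t 1 then (-1 : ℤ) ^ i else 0) = (-1 : ℤ) ^ i := by
      intro i _
      rw [if_pos ⟨fun _ => i, by simp [seqD_zero]⟩]
    rw [altG, Finset.sum_congr rfl hall, sum_neg_one_pow, Vv]
    rcases Nat.even_or_odd Λ with h | h
    · simp [Nat.not_odd_iff_even.2 h]
    · simp [h]
  | succ n ih =>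
    intro hk1
    obtain ⟨Λ₀, hΛ₀even, hcond, hsum⟩ := ih (by omega)
    set c := seqC t (n + 1) with hcdef
    set b := t (n + 1) / seqD t (n + 1) with hbdef
    have hcpos : 0 < c := seqC_pos ht0
    have htpos : 0 < t (n + 1) := htel.1 (n + 1) hk1
    have hdpos : 0 < seqD t (n + 1) := seqD_pos ht0
    have hbpos : 0 < b := Nat.div_pos (Nat.le_of_dvd htpos (seqD_dvd_t le_rfl)) hdpos
    have hco : Nat.Coprime c b := seqCB_coprime ht0
    set M := 2 * (Λ₀ + b + 1) with hMdef
    set Λ₁ := c * M with hΛ₁def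
    have hMeven : Even M := ⟨Λ₀ + b + 1, by omega⟩
    have hΛ₁even : Even Λ₁ := hMeven.mul_left c
    have hdivΛ : c ∣ Λ₁ := ⟨M, rfl⟩
    have hΛc : Λ₁ / c = M := Nat.mul_div_cancel_left _ hcpos
    -- the conductor property at level n+1
    have hcondS : ∀ i, Λ₁ ≤ i → i * seqD t (n + 1) ∈ genBy t (n + 2) := by
      intro i hi
      obtain ⟨x, hx, hxmod⟩ := exists_mul_mod hco hcpos i
      have hxb : x * b ≤ c * b := Nat.mul_le_mul_right b (by omega)
      have hcbΛ : c * b ≤ Λ₁ := by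
        rw [hΛ₁def, hMdef]
        calc c * b ≤ c * (2 * (Λ₀ + b + 1)) := Nat.mul_le_mul_left c (by omega)
          _ = c * M := by rw [hMdef]
      have hle : x * b ≤ i := le_trans (le_trans hxb hcbΛ) hi
      have hdvd : c ∣ i - x * b := (Nat.modEq_iff_dvd' hle).mp hxmod
      obtain ⟨i', hi'⟩ := hdvd
      have hieq : i = x * b + i' * c := by rw [mul_comm i' c]; omega
      have hi'ge : Λ₀ ≤ i' := by
        have h1 : c * (Λ₀ + b + 2) ≤ c * i' := by
          have h2 : c * M = c * b + c * (Λ₀ + b + 2) + c * Λ₀ := by rw [hMdef]; ring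
          omega
        have := Nat.le_of_mul_le_mul_left h1 hcpos
        omega
      exact (scaled_mem_iff htel hk1).2 ⟨x, hx, i', hcond i' hi'ge, hieq⟩
    refine ⟨Λ₁, hΛ₁even, hcondS, ?_⟩
    -- first establish the claim at Λ = Λ₁, then extend upward
    suffices hbase : 2 * altG t (n + 1) Λ₁ =
        (if Odd Λ₁ then 2 else 0) + (Vv t (n + 1) : ℤ) - 1 by
      intro Λ hΛ
      induction Λ, hΛ using Nat.le_induction with
      | base => exact hbase
      | succ Λ hΛ ihΛ =>
        have hmem := hcondS Λ hΛ
        rw [altG, Finset.sum_range_succ, if_pos hmem, ← altG]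
        rcases Nat.even_or_odd Λ with h | h
        · have h1 : ¬ Odd Λ := Nat.not_odd_iff_even.2 h
          have h2 : Odd (Λ + 1) := Even.add_one h
          rw [h.neg_one_pow]
          rw [if_neg h1] at ihΛ
          rw [if_pos h2]
          linarith
        · have h2 : ¬ Odd (Λ + 1) := Nat.not_odd_iff_even.2 (Odd.add_one h)
          rw [h.neg_one_pow]
          rw [if_pos h] at ihΛ
          rw [if_neg h2]
          linarith
    -- now the base computation at Λ₁
    clear hcondS
    have hnotoddΛ₁ : ¬ Odd Λ₁ := Nat.not_odd_iff_even.2 hΛ₁even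
    set q : ℕ → ℕ := fun x => x * b / c with hqdef
    set m : ℕ → ℕ := fun x => M - q x with hmdef
    have hqle : ∀ x, x < c → q x ≤ b := by
      intro x hx
      have h1 : x * b ≤ c * b := Nat.mul_le_mul_right b (le_of_lt hx)
      calc q x = x * b / c := rfl
        _ ≤ c * b / c := Nat.div_le_div_right h1
        _ = b := Nat.mul_div_cancel_left b hcpos
    have hmge : ∀ x, x < c → Λ₀ ≤ m x := by
      intro x hx
      have h1 := hqle x hx
      simp only [hmdef]
      omega
    have hmpar : ∀ x, x < c → (Odd (m x) ↔ Odd (q x)) := by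
      intro x hx
      have hq : q x ≤ M := le_trans (hqle x hx) (by omega)
      have hpar : Even (M - q x) ↔ Even (q x) := by
        rw [Nat.even_sub hq]
        simp [hMeven]
      rw [← Nat.not_even_iff_odd, ← Nat.not_even_iff_odd]
      exact not_congr hpar
    -- Step A: the bijection
    have hbij : ∑ p ∈ (Finset.range c).sigma
          (fun x => (Finset.range (m x)).filter (fun i => i * seqD t n ∈ genBy t (n + 1))),
          ((-1 : ℤ) ^ (p.1 * b) * ((-1 : ℤ) ^ c) ^ p.2)
        = ∑ j ∈ (Finset.range Λ₁).filter
            (fun j => j * seqD t (n + 1) ∈ genBy t (n + 2)), (-1 : ℤ) ^ j := by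
      refine Finset.sum_bij (fun p _ => p.1 * b + p.2 * c) ?_ ?_ ?_ ?_
      · rintro ⟨x, i⟩ hp
        obtain ⟨hp1, hp2⟩ := Finset.mem_sigma.1 hp
        obtain ⟨hp2r, hp2q⟩ := Finset.mem_filter.1 hp2
        have hxc := Finset.mem_range.1 hp1
        have him := Finset.mem_range.1 hp2r
        refine Finset.mem_filter.2 ⟨Finset.mem_range.2 ?_, ?_⟩
        · have h1 := (lt_div_iff_scaled (i := i) (y := x * b) hcpos hdivΛ).2
            (by rw [hΛc]; exact him)
          dsimp only
          omega
        · exact (scaled_mem_iff htel hk1).2 ⟨x, hxc, i, hp2q, rfl⟩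
      · rintro ⟨x, i⟩ hp ⟨x', i'⟩ hp' heq
        obtain ⟨hp1, hp2⟩ := Finset.mem_sigma.1 hp
        obtain ⟨hp1', hp2'⟩ := Finset.mem_sigma.1 hp'
        have hxc := Finset.mem_range.1 hp1
        have hxc' := Finset.mem_range.1 hp1'
        have hcomp : x = x' ∧ i = i' := by
          apply scaled_uniq htel hk1 hxc hxc'
          simpa using heq
        simp [hcomp.1, hcomp.2]
      · intro j hj
        obtain ⟨hjr, hjq⟩ := Finset.mem_filter.1 hj
        have hjΛ := Finset.mem_range.1 hjr
        obtain ⟨x, hx, i, hiq, hjeq⟩ := (scaled_mem_iff htel hk1).1 hjq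
        rw [← hbdef, ← hcdef] at hjeq
        have him : i < m x := by
          have h1 : i * c + x * b < Λ₁ := by omega
          have := (lt_div_iff_scaled hcpos hdivΛ).1 h1
          rw [hΛc] at this
          exact this
        refine ⟨⟨x, i⟩, Finset.mem_sigma.2 ⟨Finset.mem_range.2 hx,
          Finset.mem_filter.2 ⟨Finset.mem_range.2 him, hiq⟩⟩, hjeq.symm⟩
      · rintro ⟨x, i⟩ hp
        rw [pow_add, ← pow_mul, mul_comm i c, pow_mul]
    have hA : altG t (n + 1) Λ₁ = ∑ x ∈ Finset.range c, (-1 : ℤ) ^ (x * b) *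
        (∑ i ∈ Finset.range (m x),
          if i * seqD t n ∈ genBy t (n + 1) then ((-1 : ℤ) ^ c) ^ i else 0) := by
      rw [altG, ← Finset.sum_filter, ← hbij, Finset.sum_sigma]
      apply Finset.sum_congr rfl
      intro x _
      rw [← Finset.sum_filter, Finset.mul_sum]
    rw [if_neg hnotoddΛ₁]
    rcases Nat.even_or_odd c with hce | hcodd
    · -- c even
      have hc2 : 2 ≤ c := by
        obtain ⟨c2, hc2'⟩ := hce
        omega
      have hbodd : Odd b := coprime_even_odd hco hce
      have hceR : Even (seqC t (n + 1)) := by rw [← hcdef]; exact hce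
      have hsignb : ∀ x : ℕ, (-1 : ℤ) ^ (x * b) = (-1 : ℤ) ^ x := by
        intro x
        apply negpow_congr
        rw [Nat.even_mul]
        simp [Nat.not_even_iff_odd.2 hbodd]
      have hVv : (Vv t (n + 1) : ℤ) = (b : ℤ) := by
        simp only [Vv]
        rw [if_pos hceR, hbdef]
      have hcnt : ∀ Λ, Λ₀ ≤ Λ →
          (∑ i ∈ Finset.range Λ, if i * seqD t n ∈ genBy t (n + 1) then (1 : ℤ) else 0)
          = (∑ i ∈ Finset.range Λ₀, if i * seqD t n ∈ genBy t (n + 1) then (1 : ℤ) else 0)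
            + ((Λ : ℤ) - (Λ₀ : ℤ)) := by
        intro Λ hΛ
        induction Λ, hΛ using Nat.le_induction with
        | base => simp
        | succ Λ hΛ ihc =>
          rw [Finset.sum_range_succ, if_pos (hcond Λ hΛ), ihc]
          push_cast
          ring
      set K := ∑ i ∈ Finset.range Λ₀,
        if i * seqD t n ∈ genBy t (n + 1) then (1 : ℤ) else 0 with hKdef
      have hTx : ∀ x ∈ Finset.range c,
          (2 : ℤ) * ((-1 : ℤ) ^ (x * b) * (∑ i ∈ Finset.range (m x),
            if i * seqD t n ∈ genBy t (n + 1) then ((-1 : ℤ) ^ c) ^ i else 0))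
          = (-1 : ℤ) ^ x * (2 * (K + (M : ℤ) - (Λ₀ : ℤ)))
            - 2 * ((-1 : ℤ) ^ x * ((q x : ℕ) : ℤ)) := by
        intro x hx
        have hxc := Finset.mem_range.1 hx
        have h1 : ((-1 : ℤ) ^ c) = 1 := hce.neg_one_pow
        have hinner : (∑ i ∈ Finset.range (m x),
            if i * seqD t n ∈ genBy t (n + 1) then ((-1 : ℤ) ^ c) ^ i else 0)
            = K + ((m x : ℤ) - (Λ₀ : ℤ)) := by
          rw [← hcnt (m x) (hmge x hxc)]
          apply Finset.sum_congr rfl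
          intro i _
          rw [h1, one_pow]
        have hmx : ((m x : ℕ) : ℤ) = (M : ℤ) - ((q x : ℕ) : ℤ) := by
          have h2 : q x ≤ M := le_trans (hqle x hxc) (by omega)
          simp only [hmdef]
          omega
        rw [hsignb x, hinner, hmx]
        ring
      have e1 : (∑ x ∈ Finset.range c, (-1 : ℤ) ^ x) = 0 := by
        rw [sum_neg_one_pow]
        simp [Nat.not_odd_iff_even.2 hce]
      have e2 : 2 * ∑ x ∈ Finset.range c, (-1 : ℤ) ^ x * ((q x : ℕ) : ℤ) = 1 - (b : ℤ) := by
        simp only [hqdef]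
        exact identI1 hco hce hc2
      calc 2 * altG t (n + 1) Λ₁
          = ∑ x ∈ Finset.range c, (2 : ℤ) * ((-1 : ℤ) ^ (x * b) * (∑ i ∈ Finset.range (m x),
              if i * seqD t n ∈ genBy t (n + 1) then ((-1 : ℤ) ^ c) ^ i else 0)) := by
            rw [hA, Finset.mul_sum]
        _ = ∑ x ∈ Finset.range c, ((-1 : ℤ) ^ x * (2 * (K + (M : ℤ) - (Λ₀ : ℤ)))
              - 2 * ((-1 : ℤ) ^ x * ((q x : ℕ) : ℤ))) := Finset.sum_congr rfl hTx
        _ = (∑ x ∈ Finset.range c, (-1 : ℤ) ^ x) * (2 * (K + (M : ℤ) - (Λ₀ : ℤ)))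
              - 2 * ∑ x ∈ Finset.range c, (-1 : ℤ) ^ x * ((q x : ℕ) : ℤ) := by
            rw [Finset.sum_sub_distrib, ← Finset.sum_mul, ← Finset.mul_sum]
        _ = 0 + (Vv t (n + 1) : ℤ) - 1 := by
            rw [e1, e2, hVv]
            ring
    · -- c odd
      have hsignc : ((-1 : ℤ) ^ c) = -1 := hcodd.neg_one_pow
      have hcoddR : ¬ Even (seqC t (n + 1)) := by
        rw [← hcdef]
        exact Nat.not_even_iff_odd.2 hcodd
      have hTalt : ∀ x, (∑ i ∈ Finset.range (m x),
          if i * seqD t n ∈ genBy t (n + 1) then ((-1 : ℤ) ^ c) ^ i else 0)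
          = altG t n (m x) := by
        intro x
        rw [altG]
        apply Finset.sum_congr rfl
        intro i _
        rw [hsignc]
      have h2T : ∀ x ∈ Finset.range c, 2 * altG t n (m x)
          = (if Odd (q x) then (2 : ℤ) else 0) + ((Vv t n : ℤ) - 1) := by
        intro x hx
        rw [hsum (m x) (hmge x (Finset.mem_range.1 hx)),
          if_congr (hmpar x (Finset.mem_range.1 hx)) rfl rfl]
        ring
      rcases Nat.even_or_odd b with hbe | hbo
      · -- b even
        have hbeR : Even (t (n + 1) / seqD t (n + 1)) := by rw [← hbdef]; exact hbe
        have hsignb : ∀ x : ℕ, (-1 : ℤ) ^ (x * b) = 1 := fun x =>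
          Even.neg_one_pow (hbe.mul_left x)
        have hVv : (Vv t (n + 1) : ℤ) = (c : ℤ) * (Vv t n : ℤ) := by
          simp only [Vv]
          rw [if_neg hcoddR, if_pos hbeR, ← hcdef]
          push_cast
          ring
        have e3 : 2 * ∑ x ∈ Finset.range c, (if Odd (q x) then (1 : ℤ) else 0)
            = (c : ℤ) - 1 := by
          simp only [hqdef]
          exact identI3 hco hcodd hbe
        calc 2 * altG t (n + 1) Λ₁
            = ∑ x ∈ Finset.range c, (2 : ℤ) * ((-1 : ℤ) ^ (x * b) * (∑ i ∈ Finset.range (m x),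
                if i * seqD t n ∈ genBy t (n + 1) then ((-1 : ℤ) ^ c) ^ i else 0)) := by
              rw [hA, Finset.mul_sum]
          _ = ∑ x ∈ Finset.range c, (2 * (if Odd (q x) then (1 : ℤ) else 0)
                + ((Vv t n : ℤ) - 1)) := by
              apply Finset.sum_congr rfl
              intro x hx
              rw [hsignb x, hTalt x, one_mul, h2T x hx]
              by_cases h : Odd (q x) <;> simp [h]
          _ = 2 * (∑ x ∈ Finset.range c, (if Odd (q x) then (1 : ℤ) else 0))
                + (c : ℤ) * ((Vv t n : ℤ) - 1) := by
              rw [Finset.sum_add_distrib, ← Finset.mul_sum, Finset.sum_const,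
                Finset.card_range, nsmul_eq_mul]
          _ = 0 + (Vv t (n + 1) : ℤ) - 1 := by
              rw [e3, hVv]
              ring
      · -- b odd
        have hboR : ¬ Even (t (n + 1) / seqD t (n + 1)) := by
          rw [← hbdef]
          exact Nat.not_even_iff_odd.2 hbo
        have hsignb : ∀ x : ℕ, (-1 : ℤ) ^ (x * b) = (-1 : ℤ) ^ x := by
          intro x
          apply negpow_congr
          rw [Nat.even_mul]
          simp [Nat.not_even_iff_odd.2 hbo]
        have hVv : (Vv t (n + 1) : ℤ) = (Vv t n : ℤ) := by
          simp only [Vv]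
          rw [if_neg hcoddR, if_neg hboR]
        have e4 : ∑ x ∈ Finset.range c,
            (-1 : ℤ) ^ x * (if Odd (q x) then (1 : ℤ) else 0) = 0 := by
          simp only [hqdef]
          exact identI2 hco hcodd hbo
        have e5 : (∑ x ∈ Finset.range c, (-1 : ℤ) ^ x) = 1 := by
          rw [sum_neg_one_pow]
          simp [hcodd]
        calc 2 * altG t (n + 1) Λ₁
            = ∑ x ∈ Finset.range c, (2 : ℤ) * ((-1 : ℤ) ^ (x * b) * (∑ i ∈ Finset.range (m x),
                if i * seqD t n ∈ genBy t (n + 1) then ((-1 : ℤ) ^ c) ^ i else 0)) := by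
              rw [hA, Finset.mul_sum]
          _ = ∑ x ∈ Finset.range c, (2 * ((-1 : ℤ) ^ x * (if Odd (q x) then (1 : ℤ) else 0))
                + (-1 : ℤ) ^ x * ((Vv t n : ℤ) - 1)) := by
              apply Finset.sum_congr rfl
              intro x hx
              have : (2 : ℤ) * ((-1 : ℤ) ^ (x * b) * (∑ i ∈ Finset.range (m x),
                  if i * seqD t n ∈ genBy t (n + 1) then ((-1 : ℤ) ^ c) ^ i else 0))
                  = (-1 : ℤ) ^ x * (2 * altG t n (m x)) := by
                rw [hsignb x, hTalt x]
                ring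
              rw [this, h2T x hx]
              by_cases h : Odd (q x) <;> simp [h] <;> ring
          _ = 2 * (∑ x ∈ Finset.range c,
                (-1 : ℤ) ^ x * (if Odd (q x) then (1 : ℤ) else 0))
                + (∑ x ∈ Finset.range c, (-1 : ℤ) ^ x) * ((Vv t n : ℤ) - 1) := by
              rw [Finset.sum_add_distrib, ← Finset.mul_sum, ← Finset.sum_mul]
          _ = 0 + (Vv t (n + 1) : ℤ) - 1 := by
              rw [e4, e5, hVv]
              ring

section vlemmas
variable {t : ℕ → ℕ} {k : ℕ}

lemma Vv_odd (htel : IsTelescopic t k) : ∀ n, n ≤ k → Odd (Vv t n) := by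
  have ht0 : 0 < t 0 := htel.1 0 (Nat.zero_le k)
  intro n
  induction n with
  | zero => intro _; exact odd_one
  | succ n ih =>
    intro hk
    have hco : Nat.Coprime (seqC t (n + 1)) (t (n + 1) / seqD t (n + 1)) :=
      seqCB_coprime ht0
    show Odd (Vv t (n + 1))
    rw [Vv]
    split_ifs with h1 h2
    · exact coprime_even_odd hco h1
    · exact (Nat.not_even_iff_odd.1 h1).mul (ih (by omega))
    · exact ih (by omega)

lemma Vv_pos (htel : IsTelescopic t k) (n : ℕ) (hn : n ≤ k) : 1 ≤ Vv t n := by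
  have := Vv_odd htel n hn
  rw [Nat.odd_iff] at this
  omega

lemma all_odd_Vv (htel : IsTelescopic t k) (hodd : ∀ i ≤ k, Odd (t i)) :
    ∀ n, n ≤ k → Vv t n = 1 := by
  have ht0 : 0 < t 0 := htel.1 0 (Nat.zero_le k)
  intro n
  induction n with
  | zero => intro _; rfl
  | succ n ih =>
    intro hk
    have hDodd : Odd (seqD t n) := by
      have hdvd : seqD t n ∣ t 0 := seqD_dvd_t (Nat.zero_le n)
      have h0 := hodd 0 (Nat.zero_le k)
      rcases Nat.even_or_odd (seqD t n) with h | h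
      · exfalso
        have : (2 : ℕ) ∣ t 0 := dvd_trans h.two_dvd hdvd
        rw [Nat.odd_iff] at h0
        omega
      · exact h
    have hcodd : ¬ Even (seqC t (n + 1)) := by
      have hdvd : seqC t (n + 1) ∣ seqD t n := ⟨seqD t (n + 1), (seqC_succ_mul ht0).symm⟩
      intro h
      have : (2 : ℕ) ∣ seqD t n := dvd_trans h.two_dvd hdvd
      rw [Nat.odd_iff] at hDodd
      omega
    have hbodd : ¬ Even (t (n + 1) / seqD t (n + 1)) := by
      have hdvd : t (n + 1) / seqD t (n + 1) ∣ t (n + 1) :=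
        ⟨seqD t (n + 1), (seqB_mul ht0).symm⟩
      intro h
      have h2 : (2 : ℕ) ∣ t (n + 1) := dvd_trans h.two_dvd hdvd
      have h3 := hodd (n + 1) hk
      rw [Nat.odd_iff] at h3
      omega
    rw [Vv, if_neg hcodd, if_neg hbodd]
    exact ih (by omega)

end vlemmas

section minimal
variable {t : ℕ → ℕ} {k : ℕ}

lemma c_ne_one (htel : IsTelescopic t k)
    (hmin : ∀ J : Finset ℕ, J ⊂ Finset.range (k + 1) → genByIdx t J ≠ genBy t (k + 1))
    {n : ℕ} (h1 : 1 ≤ n) (hk : n ≤ k) : seqC t n ≠ 1 := by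
  intro hc1
  have htn : t n ∈ genBy t n := by
    have := htel.2 n h1 hk
    rwa [hc1, one_mul] at this
  obtain ⟨y, hy⟩ := htn
  have hnmem : n ∈ Finset.range (k + 1) := Finset.mem_range.2 (by omega)
  set J := (Finset.range (k + 1)).erase n with hJdef
  have hJss : J ⊂ Finset.range (k + 1) := Finset.erase_ssubset hnmem
  apply hmin J hJss
  ext s
  constructor
  · rintro ⟨x, rfl⟩
    refine ⟨fun i => if i = n then 0 else x i, ?_⟩
    rw [← Finset.sum_erase_add _ _ hnmem]
    have hzero : (if n = n then 0 else x n) * t n = 0 := by simp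
    rw [hzero, add_zero]
    exact (Finset.sum_congr rfl fun i hi => by
      simp [Finset.ne_of_mem_erase hi]).symm
  · rintro ⟨x, rfl⟩
    refine ⟨fun i => (if i = n then 0 else x i) + x n * (if i < n then y i else 0), ?_⟩
    have hsplit : ∑ i ∈ J, x i * t i + x n * t n
        = ∑ i ∈ Finset.range (k + 1), x i * t i :=
      Finset.sum_erase_add _ _ hnmem
    have hA : ∑ i ∈ J, (if i = n then 0 else x i) * t i = ∑ i ∈ J, x i * t i :=
      Finset.sum_congr rfl fun i hi => by rw [if_neg (Finset.ne_of_mem_erase hi)]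
    have hsub : Finset.range n ⊆ J := by
      intro i hi
      have := Finset.mem_range.1 hi
      exact Finset.mem_erase.2 ⟨by omega, Finset.mem_range.2 (by omega)⟩
    have hB : ∑ i ∈ J, (x n * (if i < n then y i else 0)) * t i
        = x n * ∑ i ∈ Finset.range n, y i * t i := by
      rw [← Finset.sum_subset hsub (fun i _ hi => by
        have : ¬ i < n := fun hlt => hi (Finset.mem_range.2 hlt)
        simp [this])]
      rw [Finset.mul_sum]
      exact Finset.sum_congr rfl fun i hi => by
        rw [if_pos (Finset.mem_range.1 hi)]
        ring
    calc ∑ i ∈ Finset.range (k + 1), x i * t i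
        = ∑ i ∈ J, x i * t i + x n * t n := hsplit.symm
      _ = ∑ i ∈ J, (if i = n then 0 else x i) * t i
            + ∑ i ∈ J, (x n * (if i < n then y i else 0)) * t i := by
          rw [hA, hB, ← hy]
      _ = ∑ i ∈ J, ((if i = n then 0 else x i) + x n * (if i < n then y i else 0)) * t i := by
          rw [← Finset.sum_add_distrib]
          exact Finset.sum_congr rfl fun i _ => by ring

lemma b_ne_one (htel : IsTelescopic t k)
    (hmin : ∀ J : Finset ℕ, J ⊂ Finset.range (k + 1) → genByIdx t J ≠ genBy t (k + 1))
    {n : ℕ} (h1 : 1 ≤ n) (hk : n ≤ k) : t n / seqD t n ≠ 1 := by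
  have ht0 : 0 < t 0 := htel.1 0 (Nat.zero_le k)
  intro hb1
  have htn : t n = seqD t n := by
    have h := Nat.div_mul_cancel (seqD_dvd_t (le_refl n) : seqD t n ∣ t n)
    rw [hb1, one_mul] at h
    exact h.symm
  have hdvd : t n ∣ t 0 := by
    rw [htn]
    exact seqD_dvd_t (Nat.zero_le n)
  obtain ⟨mm, hm⟩ := hdvd
  have h0mem : (0 : ℕ) ∈ Finset.range (k + 1) := Finset.mem_range.2 (by omega)
  set J := (Finset.range (k + 1)).erase 0 with hJdef
  have hnmemJ : n ∈ J := Finset.mem_erase.2 ⟨by omega, Finset.mem_range.2 (by omega)⟩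
  have hJss : J ⊂ Finset.range (k + 1) := Finset.erase_ssubset h0mem
  apply hmin J hJss
  ext s
  constructor
  · rintro ⟨x, rfl⟩
    refine ⟨fun i => if i = 0 then 0 else x i, ?_⟩
    rw [← Finset.sum_erase_add _ _ h0mem]
    have hzero : (if (0:ℕ) = 0 then 0 else x 0) * t 0 = 0 := by simp
    rw [hzero, add_zero]
    exact (Finset.sum_congr rfl fun i hi => by
      simp [Finset.ne_of_mem_erase hi]).symm
  · rintro ⟨x, rfl⟩
    refine ⟨fun i => (if i = 0 then 0 else x i) + (if i = n then x 0 * mm else 0), ?_⟩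
    have hsplit : ∑ i ∈ J, x i * t i + x 0 * t 0
        = ∑ i ∈ Finset.range (k + 1), x i * t i :=
      Finset.sum_erase_add _ _ h0mem
    have hA : ∑ i ∈ J, (if i = 0 then 0 else x i) * t i = ∑ i ∈ J, x i * t i :=
      Finset.sum_congr rfl fun i hi => by rw [if_neg (Finset.ne_of_mem_erase hi)]
    have hB : ∑ i ∈ J, (if i = n then x 0 * mm else 0) * t i = x 0 * t 0 := by
      have : ∀ i ∈ J, (if i = n then x 0 * mm else 0) * t i
          = if i = n then x 0 * mm * t n else 0 := by
        intro i _
        by_cases h : i = n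
        · subst h; simp
        · simp [h]
      rw [Finset.sum_congr rfl this, Finset.sum_ite_eq' J n (fun _ => x 0 * mm * t n),
        if_pos hnmemJ, hm]
      ring
    calc ∑ i ∈ Finset.range (k + 1), x i * t i
        = ∑ i ∈ J, x i * t i + x 0 * t 0 := hsplit.symm
      _ = ∑ i ∈ J, (if i = 0 then 0 else x i) * t i
            + ∑ i ∈ J, (if i = n then x 0 * mm else 0) * t i := by rw [hA, hB]
      _ = ∑ i ∈ J, ((if i = 0 then 0 else x i) + (if i = n then x 0 * mm else 0)) * t i := by
          rw [← Finset.sum_add_distrib]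
          exact Finset.sum_congr rfl fun i _ => by ring

end minimal

section someeven
variable {t : ℕ → ℕ} {k : ℕ}

lemma exists_even_step (htel : IsTelescopic t k) (hgcd : seqD t k = 1)
    (hsome : ∃ i, i ≤ k ∧ Even (t i)) :
    ∃ n, 1 ≤ n ∧ n ≤ k ∧ (Even (seqC t n) ∨ Even (t n / seqD t n)) := by
  have ht0 : 0 < t 0 := htel.1 0 (Nat.zero_le k)
  by_contra hcon
  push_neg at hcon
  have hallodd : ∀ n, 1 ≤ n → n ≤ k → Odd (seqC t n) ∧ Odd (t n / seqD t n) := by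
    intro n h1 hk
    have := hcon n h1 hk
    exact ⟨Nat.not_even_iff_odd.1 this.1, Nat.not_even_iff_odd.1 this.2⟩
  have hD : ∀ j, j ≤ k → Odd (seqD t (k - j)) := by
    intro j
    induction j with
    | zero => intro _; simp [hgcd]
    | succ j ihj =>
      intro hjk
      have hkj : k - (j + 1) + 1 = k - j := by omega
      have hmul : seqC t (k - (j + 1) + 1) * seqD t (k - (j + 1) + 1) = seqD t (k - (j + 1)) :=
        seqC_succ_mul ht0
      rw [hkj] at hmul
      have hodd1 := (hallodd (k - j) (by omega) (by omega)).1
      have hodd2 := ihj (by omega)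
      rw [← hmul]
      exact hodd1.mul hodd2
  obtain ⟨i, hik, hieven⟩ := hsome
  have hiodd : Odd (t i) := by
    rcases Nat.eq_zero_or_pos i with rfl | hi0
    · have := hD k (le_refl k)
      rw [Nat.sub_self] at this
      have h2 : seqD t 0 = t 0 := seqD_zero
      rwa [h2] at this
    · obtain ⟨i', rfl⟩ : ∃ i', i = i' + 1 := ⟨i - 1, by omega⟩
      have hb := (hallodd (i' + 1) (by omega) hik).2
      have hDi : Odd (seqD t (i' + 1)) := by
        have := hD (k - (i' + 1)) (by omega)
        rwa [Nat.sub_sub_self hik] at this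
      have := hb.mul hDi
      rwa [seqB_mul ht0] at this
  rw [Nat.odd_iff] at hiodd
  rw [Nat.even_iff] at hieven
  omega

lemma some_even_V3 (htel : IsTelescopic t k) (hgcd : seqD t k = 1)
    (hmin : ∀ J : Finset ℕ, J ⊂ Finset.range (k + 1) → genByIdx t J ≠ genBy t (k + 1))
    (hsome : ∃ i, i ≤ k ∧ Even (t i)) : 3 ≤ Vv t k := by
  have ht0 : 0 < t 0 := htel.1 0 (Nat.zero_le k)
  obtain ⟨n0, hn01, hn0k, hn0ev⟩ := exists_even_step htel hgcd hsome
  -- helper: at any step n+1 ≤ k that is "non-odd", Vv jumps to ≥ 3 or stays ≥ 3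
  have hstep : ∀ n, n + 1 ≤ k →
      ((Even (seqC t (n + 1)) ∨ Even (t (n + 1) / seqD t (n + 1))) ∨ 3 ≤ Vv t n) →
      3 ≤ Vv t (n + 1) := by
    intro n hk1 hcase
    have hco : Nat.Coprime (seqC t (n + 1)) (t (n + 1) / seqD t (n + 1)) :=
      seqCB_coprime ht0
    have hVpos : 1 ≤ Vv t n := Vv_pos htel n (by omega)
    rw [Vv]
    split_ifs with h1 h2
    · -- c even : value b, odd and ≠ 1
      have hbodd : Odd (t (n + 1) / seqD t (n + 1)) := coprime_even_odd hco h1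
      have hbne := b_ne_one htel hmin (by omega : 1 ≤ n + 1) hk1
      rw [Nat.odd_iff] at hbodd
      obtain ⟨bb, hbb⟩ : ∃ bb, bb = t (n + 1) / seqD t (n + 1) := ⟨_, rfl⟩
      rw [← hbb] at hbodd hbne ⊢
      omega
    · -- c odd, b even : value c * Vv n with c odd ≠ 1
      have hcodd : Odd (seqC t (n + 1)) := Nat.not_even_iff_odd.1 h1
      have hcne := c_ne_one htel hmin (by omega : 1 ≤ n + 1) hk1
      have hc3 : 3 ≤ seqC t (n + 1) := by
        rw [Nat.odd_iff] at hcodd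
        have hcpos : 0 < seqC t (n + 1) := seqC_pos ht0
        omega
      calc 3 ≤ seqC t (n + 1) * 1 := by omega
        _ ≤ seqC t (n + 1) * Vv t n := Nat.mul_le_mul_left _ hVpos
    · -- both odd: must be the "stays ≥ 3" case
      rcases hcase with hcase | hcase
      · rcases hcase with h | h
        · exact absurd h h1
        · exact absurd h h2
      · exact hcase
  -- now induct from n0 up to k
  obtain ⟨m0, rfl⟩ : ∃ m0, n0 = m0 + 1 := ⟨n0 - 1, by omega⟩
  have hmain : ∀ n, m0 + 1 ≤ n → n ≤ k → 3 ≤ Vv t n := by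
    intro n hn
    induction n, hn using Nat.le_induction with
    | base => intro hk1; exact hstep m0 hk1 (Or.inl hn0ev)
    | succ n hn ihn =>
      intro hk1
      exact hstep n hk1 (Or.inr (ihn (by omega)))
  exact hmain k hn0k le_rfl

end someeven


open Classical in
/-- For `S` free generated by a minimal telescopic sequence `T = (t_0, …, t_k)` with
`gcd T = 1` (no proper subsequence of `T` generates `S`), `S` has at least as many odd
gaps as even gaps, with equality iff every term of `T` is odd. -/
theorem parity_free_minimal (t : ℕ → ℕ) (k : ℕ) (htel : IsTelescopic t k)
    (hgcd : seqD t k = 1)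
    (hmin : ∀ J : Finset ℕ, J ⊂ Finset.range (k + 1) →
      genByIdx t J ≠ genBy t (k + 1)) :
    countEven (genBy t (k + 1))ᶜ ≤ countOdd (genBy t (k + 1))ᶜ ∧
      (countOdd (genBy t (k + 1))ᶜ = countEven (genBy t (k + 1))ᶜ ↔
        ∀ i ≤ k, Odd (t i)) := by
  have ht0 : 0 < t 0 := htel.1 0 (Nat.zero_le k)
  obtain ⟨Λ₀, hEv, hcond0, hsum⟩ := key_induction t k htel k le_rfl
  have hcond : ∀ i, Λ₀ ≤ i → i ∈ genBy t (k + 1) := by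
    intro i hi
    have := hcond0 i hi
    rwa [hgcd, mul_one] at this
  set NS : Finset ℕ := (Finset.range Λ₀).filter (fun i => i ∉ genBy t (k + 1)) with hNS
  set A := NS.filter (fun i => ¬ Even i) with hA
  set B := NS.filter (fun i => Even i) with hB
  have hOcard : countOdd (genBy t (k + 1))ᶜ = A.card := by
    rw [countOdd]
    have hset : {x ∈ (genBy t (k + 1))ᶜ | Odd x} = ↑A := by
      ext x
      simp only [hA, hNS, Finset.coe_filter, Set.mem_setOf_eq, Finset.mem_filter,
        Finset.mem_range, Set.mem_compl_iff]
      constructor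
      · rintro ⟨hx1, hx2⟩
        have hxΛ : x < Λ₀ := by
          by_contra hcon
          exact hx1 (hcond x (le_of_not_gt hcon))
        exact ⟨⟨hxΛ, hx1⟩, Nat.not_even_iff_odd.2 hx2⟩
      · rintro ⟨⟨_, h1⟩, h2⟩
        exact ⟨h1, Nat.not_even_iff_odd.1 h2⟩
    rw [hset, Set.ncard_coe_finset]
  have hEcard : countEven (genBy t (k + 1))ᶜ = B.card := by
    rw [countEven]
    have hset : {x ∈ (genBy t (k + 1))ᶜ | Even x} = ↑B := by
      ext x
      simp only [hB, hNS, Finset.coe_filter, Set.mem_setOf_eq, Finset.mem_filter,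
        Finset.mem_range, Set.mem_compl_iff]
      constructor
      · rintro ⟨hx1, hx2⟩
        have hxΛ : x < Λ₀ := by
          by_contra hcon
          exact hx1 (hcond x (le_of_not_gt hcon))
        exact ⟨⟨hxΛ, hx1⟩, hx2⟩
      · rintro ⟨⟨_, h1⟩, h2⟩
        exact ⟨h1, h2⟩
    rw [hset, Set.ncard_coe_finset]
  have hsplit : ∑ i ∈ NS, (-1 : ℤ) ^ i = (B.card : ℤ) - (A.card : ℤ) := by
    rw [← Finset.sum_filter_add_sum_filter_not NS (fun i => Even i) (fun i => (-1 : ℤ) ^ i)]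
    have h1 : ∑ i ∈ NS.filter (fun i => Even i), (-1 : ℤ) ^ i = (B.card : ℤ) := by
      rw [Finset.sum_congr rfl (fun i hi => (Finset.mem_filter.1 hi).2.neg_one_pow)]
      simp [hB]
    have h2 : ∑ i ∈ NS.filter (fun i => ¬ Even i), (-1 : ℤ) ^ i = -(A.card : ℤ) := by
      rw [Finset.sum_congr rfl (fun i hi =>
        (Nat.not_even_iff_odd.1 (Finset.mem_filter.1 hi).2).neg_one_pow)]
      simp [hA]
    rw [h1, h2]
    ring
  have htotal : ∑ i ∈ Finset.range Λ₀, (-1 : ℤ) ^ i = 0 := by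
    rw [sum_neg_one_pow]
    simp [Nat.not_odd_iff_even.2 hEv]
  have haltsplit : altG t k Λ₀ + ∑ i ∈ NS, (-1 : ℤ) ^ i = 0 := by
    rw [← htotal, altG, hNS, Finset.sum_filter, ← Finset.sum_add_distrib]
    apply Finset.sum_congr rfl
    intro i _
    have hiff : (i * seqD t k ∈ genBy t (k + 1)) ↔ (i ∈ genBy t (k + 1)) := by
      rw [hgcd, mul_one]
    by_cases h : i ∈ genBy t (k + 1)
    · simp [h, hiff.2 h]
    · have h2 : i * seqD t k ∉ genBy t (k + 1) := fun hh => h (hiff.1 hh)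
      simp [h, h2]
  have hkey : 2 * ((B.card : ℤ) - (A.card : ℤ)) = 1 - (Vv t k : ℤ) := by
    have h4 := hsum Λ₀ le_rfl
    rw [if_neg (Nat.not_odd_iff_even.2 hEv)] at h4
    rw [← hsplit]
    linarith [haltsplit, h4]
  have hVodd := Vv_odd htel k le_rfl
  rw [Nat.odd_iff] at hVodd
  constructor
  · rw [hEcard, hOcard]
    omega
  · rw [hOcard, hEcard]
    constructor
    · intro heq
      have hV1 : Vv t k = 1 := by omega
      intro i hik
      by_contra hodd
      have heven : Even (t i) := Nat.not_odd_iff_even.1 hodd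
      have := some_even_V3 htel hgcd hmin ⟨i, hik, heven⟩
      omega
    · intro hodd
      have hV1 : Vv t k = 1 := all_odd_Vv htel hodd k le_rfl
      omega
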